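/- Fix z ∈ ℂ and m ∈ ℂ. Let f : ℝ → ℂ solve −f'' + (p+q)·f = z²·f on ℝ and coincide, together with its first derivative, with θ(·,z) + m·φ(·,z) on [t,∞). Then f(0) = 1 + ∫₀ᵗ φ(x,z)·q(x)·f(x) dx and f'(0) = m − ∫₀ᵗ θ(x,z)·q(x)·f(x) dx. -/

import Mathlib

/-!
The Wronskian `W(u, v) = u v' - u' v` of a solution `u` of `-u'' + p u = z² u` and a solution `v`
of `-v'' + (p + q) v = z² v` satisfies `W(u, v)' = u q v`, so `W(u, v)(t) - W(u, v)(0) = ∫₀ᵗ u q v`.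
Take `v = f` and `u = φ`, resp. `u = θ`: at `t` the function `f` is `θ + m φ` and `W(θ, φ) ≡ 1`,
which evaluates the left-hand sides as `f(0) - 1`, resp. `m - f'(0)`.
Since `f'` is only absolutely continuous, `W' = u q v` is used in integrated form, obtained by
integration by parts against a primitive (a Fubini argument on a triangle).
-/

open MeasureTheory intervalIntegral Set

noncomputable section

/-- `y` together with its x-derivative `y'` solves `-y'' + p·y = z²·y` on `ℝ`,
with `y'` locally absolutely continuous; this is encoded by requiring that `y'`
is everywhere the derivative of `y` and that `y'` is the integral of
`(p - z²)·y` (the equation holding a.e.). -/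
def IsSol (p : ℝ → ℝ) (z : ℂ) (y y' : ℝ → ℂ) : Prop :=
  (∀ x : ℝ, HasDerivAt y (y' x) x) ∧
  (∀ x : ℝ, y' x = y' 0 + ∫ s in (0:ℝ)..x, ((p s : ℂ) - z ^ 2) * y s)

lemma ae_eq_comp_add_nat_mul {α : Type*} {f : ℝ → α} {T : ℝ}
    (hper : ∀ᵐ x ∂(volume : Measure ℝ), f (x + T) = f x) (n : ℕ) :
    (fun x => f (x + n * T)) =ᵐ[volume] f := by
  induction n with
  | zero => simp
  | succ k ih =>
    have hshift : ∀ᵐ x : ℝ, f (x + k * T + T) = f (x + k * T) :=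
      (measurePreserving_add_right volume ((k : ℝ) * T)).quasiMeasurePreserving.ae hper
    filter_upwards [hshift, ih] with x hx hk
    rw [← hk, ← hx]
    push_cast
    ring_nf

lemma intervalIntegrable_of_ae_periodic {E : Type*} [NormedAddCommGroup E] {f : ℝ → E} {T : ℝ}
    (hT : 0 < T) (hper : ∀ᵐ x ∂(volume : Measure ℝ), f (x + T) = f x)
    (hf : IntervalIntegrable f volume 0 T) {t : ℝ} (ht : 0 ≤ t) :
    IntervalIntegrable f volume 0 t := by
  have hperiod (k : ℕ) : IntervalIntegrable f volume (k * T) ((k + 1 : ℕ) * T) := by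
    have hshifted : IntervalIntegrable (fun x => f (x + k * T)) volume 0 T :=
      (intervalIntegrable_congr_ae
        ((ae_eq_comp_add_nat_mul hper k).filter_mono ae_restrict_le).symm).1 hf
    rw [IntervalIntegrable.comp_add_right_iff] at hshifted
    convert hshifted using 1 <;> push_cast <;> ring
  have hmany : IntervalIntegrable f volume 0 (⌈t / T⌉₊ * T) := by
    simpa using IntervalIntegrable.trans_iterate (a := fun k : ℕ => k * T) fun k _ => hperiod k
  refine hmany.mono_set ?_
  rw [uIcc_of_le ht, uIcc_of_le (by positivity)]
  exact Icc_subset_Icc le_rfl ((div_le_iff₀ hT).1 (Nat.le_ceil _))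

section ByParts

variable {𝕜 : Type*} [RCLike 𝕜] {a b : ℝ}

lemma integral_mul_primitive_eq_integral_tail_mul (hab : a ≤ b) {h g : ℝ → 𝕜}
    (hh : IntervalIntegrable h volume a b) (hg : IntervalIntegrable g volume a b) :
    (∫ x in a..b, h x * ∫ s in a..x, g s) = ∫ s in a..b, (∫ x in s..b, h x) * g s := by
  set μ := volume.restrict (Ioc a b)
  have hh' : Integrable h μ := (intervalIntegrable_iff_integrableOn_Ioc_of_le hab).1 hh
  have hg' : Integrable g μ := (intervalIntegrable_iff_integrableOn_Ioc_of_le hab).1 hg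
  set F : ℝ × ℝ → 𝕜 := {z : ℝ × ℝ | z.2 ≤ z.1}.indicator (fun z => h z.1 * g z.2) with hF
  have hFint : Integrable F (μ.prod μ) :=
    (hh'.mul_prod hg').indicator (measurableSet_le measurable_snd measurable_fst)
  have hleft : (∫ x, (∫ s, F (x, s) ∂μ) ∂μ) = ∫ x in a..b, h x * ∫ s in a..x, g s := by
    rw [integral_of_le hab]
    refine setIntegral_congr_fun measurableSet_Ioc fun x hx => ?_
    have hslice : ∀ s, F (x, s) = (Iic x).indicator (fun s => h x * g s) s := by
      intro s; simp [hF, indicator_apply]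
    simp_rw [hslice]
    rw [setIntegral_indicator measurableSet_Iic, Ioc_inter_Iic, min_eq_right hx.2,
      MeasureTheory.integral_const_mul, integral_of_le hx.1.le]
  have hright : (∫ s, (∫ x, F (x, s) ∂μ) ∂μ) = ∫ s in a..b, (∫ x in s..b, h x) * g s := by
    rw [integral_of_le hab]
    refine setIntegral_congr_fun measurableSet_Ioc fun s hs => ?_
    have hslice : ∀ x, F (x, s) = (Ici s).indicator (fun x => h x * g s) x := by
      intro x; simp [hF, indicator_apply]
    simp_rw [hslice]
    have hset : Ioc a b ∩ Ici s = Icc s b := by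
      ext y
      simp only [mem_inter_iff, mem_Ioc, mem_Ici, mem_Icc]
      exact ⟨fun ⟨⟨_, h2⟩, h3⟩ => ⟨h3, h2⟩, fun ⟨h1, h2⟩ => ⟨⟨hs.1.trans_le h1, h2⟩, h1⟩⟩
    rw [setIntegral_indicator measurableSet_Ici, hset, integral_Icc_eq_integral_Ioc,
      MeasureTheory.integral_mul_const, ← integral_of_le hs.2]
  rw [← hleft, ← hright]
  exact integral_integral_swap hFint

lemma integral_by_parts_of_eq_primitive (hab : a ≤ b) {u u' g v : ℝ → 𝕜}
    (hu : ∀ x ∈ Icc a b, HasDerivAt u (u' x) x) (hu' : IntervalIntegrable u' volume a b)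
    (hg : IntervalIntegrable g volume a b) (hv : ∀ x ∈ Icc a b, v x = v a + ∫ s in a..x, g s) :
    u b * v b - u a * v a = (∫ x in a..b, u' x * v x) + ∫ x in a..b, u x * g x := by
  have hu_Icc : ∀ x ∈ uIcc a b, HasDerivAt u (u' x) x := by rwa [uIcc_of_le hab]
  have hucont : ContinuousOn u (uIcc a b) := fun x hx =>
    (hu_Icc x hx).continuousAt.continuousWithinAt
  have hG : ContinuousOn (fun x => ∫ s in a..x, g s) (uIcc a b) :=
    continuousOn_primitive_interval' hg left_mem_uIcc
  have hsplit : (∫ x in a..b, u' x * v x)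
      = (∫ x in a..b, u' x * v a) + ∫ x in a..b, u' x * ∫ s in a..x, g s := by
    rw [← integral_add (hu'.mul_const _) (hu'.mul_continuousOn hG)]
    refine integral_congr fun x hx => ?_
    rw [hv x (by rwa [uIcc_of_le hab] at hx)]
    ring
  have hconst : (∫ x in a..b, u' x * v a) = (u b - u a) * v a := by
    rw [intervalIntegral.integral_mul_const, integral_eq_sub_of_hasDerivAt hu_Icc hu']
  have hswap : (∫ x in a..b, u' x * ∫ s in a..x, g s) = ∫ s in a..b, (u b - u s) * g s := by
    rw [integral_mul_primitive_eq_integral_tail_mul hab hu' hg]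
    refine integral_congr fun s hs => ?_
    rw [uIcc_of_le hab] at hs
    have hsub : uIcc s b ⊆ uIcc a b := by
      rw [uIcc_of_le hs.2, uIcc_of_le hab]; exact Icc_subset_Icc hs.1 le_rfl
    rw [integral_eq_sub_of_hasDerivAt (fun x hx => hu_Icc x (hsub hx)) (hu'.mono_set hsub)]
  have htail : (∫ s in a..b, (u b - u s) * g s)
      = u b * (∫ s in a..b, g s) - ∫ s in a..b, u s * g s := by
    rw [← intervalIntegral.integral_const_mul,
      ← integral_sub (hg.const_mul _) (hg.continuousOn_mul hucont)]
    exact integral_congr fun s _ => by ring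
  rw [hsplit, hconst, hswap, htail, hv b ⟨hab, le_rfl⟩]
  ring

end ByParts

def wronskian (u u' v v' : ℝ → ℂ) (x : ℝ) : ℂ := u x * v' x - u' x * v x

namespace IsSol

variable {p : ℝ → ℝ} {z : ℂ} {y y' : ℝ → ℂ} {t : ℝ}

lemma continuous (h : IsSol p z y y') : Continuous y :=
  continuous_iff_continuousAt.2 fun x => (h.1 x).continuousAt

lemma intervalIntegrable_potential_mul (h : IsSol p z y y')
    (hp : IntervalIntegrable p volume 0 t) :
    IntervalIntegrable (fun x => ((p x : ℂ) - z ^ 2) * y x) volume 0 t := by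
  have hpC : IntervalIntegrable (fun x => (p x : ℂ)) volume 0 t := ⟨hp.1.ofReal, hp.2.ofReal⟩
  exact (hpC.sub intervalIntegrable_const).mul_continuousOn h.continuous.continuousOn

lemma intervalIntegrable_deriv (h : IsSol p z y y') (hp : IntervalIntegrable p volume 0 t) :
    IntervalIntegrable y' volume 0 t := by
  refine ContinuousOn.intervalIntegrable ?_
  refine (continuousOn_const.add ?_).congr fun x _ => h.2 x
  exact continuousOn_primitive_interval' (h.intervalIntegrable_potential_mul hp) left_mem_uIcc

lemma wronskian_sub_wronskian {a b : ℝ → ℝ} {u u' v v' : ℝ → ℂ}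
    (hu : IsSol a z u u') (hv : IsSol b z v v') (ha : IntervalIntegrable a volume 0 t)
    (hb : IntervalIntegrable b volume 0 t) (ht : 0 ≤ t) :
    wronskian u u' v v' t - wronskian u u' v v' 0
      = ∫ x in (0:ℝ)..t, u x * ((b x - a x : ℝ) : ℂ) * v x := by
  have hga := hu.intervalIntegrable_potential_mul ha
  have hgb := hv.intervalIntegrable_potential_mul hb
  have huv := integral_by_parts_of_eq_primitive ht (fun x _ => hu.1 x)
    (hu.intervalIntegrable_deriv ha) hgb (fun x _ => hv.2 x)
  have hvu := integral_by_parts_of_eq_primitive ht (fun x _ => hv.1 x)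
    (hv.intervalIntegrable_deriv hb) hga (fun x _ => hu.2 x)
  have hcomm : (∫ x in (0:ℝ)..t, u' x * v' x) = ∫ x in (0:ℝ)..t, v' x * u' x :=
    integral_congr fun x _ => mul_comm _ _
  have hpotential : (∫ x in (0:ℝ)..t, u x * (((b x : ℂ) - z ^ 2) * v x))
      - (∫ x in (0:ℝ)..t, v x * (((a x : ℂ) - z ^ 2) * u x))
      = ∫ x in (0:ℝ)..t, u x * ((b x - a x : ℝ) : ℂ) * v x := by
    rw [← integral_sub (hgb.continuousOn_mul hu.continuous.continuousOn)
      (hga.continuousOn_mul hv.continuous.continuousOn)]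
    exact integral_congr fun x _ => by push_cast; ring
  unfold wronskian
  linear_combination huv - hvu + hcomm + hpotential

end IsSol

theorem statement_10_general
    (p q : ℝ → ℝ) (t : ℝ) (ht : 0 < t)
    (hper : ∀ᵐ x ∂(volume : Measure ℝ), p (x + 1) = p x)
    (hpint : IntegrableOn p (Set.Icc 0 1))
    (hq : Integrable q)
    (z m : ℂ)
    (θ φ θD φD : ℝ → ℂ)
    (hθ : IsSol p z θ θD) (hθ0 : θ 0 = 1) (hθD0 : θD 0 = 0)
    (hφ : IsSol p z φ φD) (hφ0 : φ 0 = 0) (hφD0 : φD 0 = 1)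
    (f fD : ℝ → ℂ)
    (hf : IsSol (fun x => p x + q x) z f fD)
    (hmatch : ∀ x : ℝ, t ≤ x → f x = θ x + m * φ x ∧ fD x = θD x + m * φD x) :
    f 0 = 1 + ∫ x in (0:ℝ)..t, φ x * (q x : ℂ) * f x ∧
    fD 0 = m - ∫ x in (0:ℝ)..t, θ x * (q x : ℂ) * f x := by
  have hp : IntervalIntegrable p volume 0 t :=
    intervalIntegrable_of_ae_periodic one_pos hper
      ((intervalIntegrable_iff_integrableOn_Icc_of_le zero_le_one).2 hpint) ht.le
  have hpq : IntervalIntegrable (fun x => p x + q x) volume 0 t := hp.add hq.intervalIntegrable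
  have hθφ := hθ.wronskian_sub_wronskian hφ hp hp ht.le
  have hφf := hφ.wronskian_sub_wronskian hf hp hpq ht.le
  have hθf := hθ.wronskian_sub_wronskian hf hp hpq ht.le
  simp only [sub_self, Complex.ofReal_zero, mul_zero, zero_mul, intervalIntegral.integral_zero,
    add_sub_cancel_left] at hθφ hφf hθf
  obtain ⟨hft, hfDt⟩ := hmatch t le_rfl
  unfold wronskian at hθφ hφf hθf
  rw [hft, hfDt, hφ0, hφD0] at hφf
  rw [hft, hfDt, hθ0, hθD0] at hθf
  rw [hθ0, hθD0, hφ0, hφD0] at hθφ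
  constructor
  · linear_combination hφf + hθφ
  · linear_combination -hθf + m * hθφ

/-- If `f` solves `-f''+(p+q)f = z²f` and coincides (with derivative) with
`θ + mφ` on `[t,∞)`, then `f(0) = 1 + ∫₀ᵗ φ q f` and `f'(0) = m − ∫₀ᵗ θ q f`. -/
theorem statement_10
    (p q : ℝ → ℝ) (t : ℝ) (ht : 0 < t)
    (hper : ∀ᵐ x ∂(volume : Measure ℝ), p (x + 1) = p x)
    (hpint : IntegrableOn p (Set.Icc 0 1))
    (hq : Integrable q) (hqsupp : Function.support q ⊆ Set.Icc 0 t)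
    (z m : ℂ)
    (θ φ θD φD : ℝ → ℂ)
    (hθ : IsSol p z θ θD) (hθ0 : θ 0 = 1) (hθD0 : θD 0 = 0)
    (hφ : IsSol p z φ φD) (hφ0 : φ 0 = 0) (hφD0 : φD 0 = 1)
    (f fD : ℝ → ℂ)
    (hf : IsSol (fun x => p x + q x) z f fD)
    (hmatch : ∀ x : ℝ, t ≤ x → f x = θ x + m * φ x ∧ fD x = θD x + m * φD x) :
    f 0 = 1 + ∫ x in (0:ℝ)..t, φ x * (q x : ℂ) * f x ∧
    fD 0 = m - ∫ x in (0:ℝ)..t, θ x * (q x : ℂ) * f x :=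
  statement_10_general p q t ht hper hpint hq z m θ φ θD φD hθ hθ0 hθD0 hφ hφ0 hφD0 f fD hf hmatch
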